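/- In the modified AKV model, if M < N−1 then there exists a state ρ with ℒ_*(ρ) = 0 which satisfies tr(ρ |ψ⟩⟨e_1|) = 0, tr(ρ Z) = 0 and tr(ρ |e_0⟩⟨ψ'|) = 0 (i.e., ρ lies in the annihilator of all Kraus operators), yet ρ does not commute with P_0; in particular ρ does not commute with the reference Hamiltonian H := ε_1 P_1 + ε_2 P_2 + ε_3 P_3 for any choice of distinct positive ε_1, ε_2, ε_3. -/

import Mathlib

noncomputable section

open ContinuousLinearMap Finset
open scoped InnerProductSpace

/-- The Hilbert space ℂ^(N+M+1) of the modified AKV model. -/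
abbrev AKVSpace (N M : ℕ) := EuclideanSpace ℂ (Fin (N + M + 1))

namespace AKV

variable (N M : ℕ)

/-- standard basis vector -/
def ket (i : Fin (N + M + 1)) : AKVSpace N M := EuclideanSpace.single i 1

/-- rank-one operator |u⟩⟨v| : x ↦ ⟪v, x⟫ • u -/
def ketbra (u v : AKVSpace N M) : AKVSpace N M →L[ℂ] AKVSpace N M :=
  (innerSL ℂ v).smulRight u

/-- indices 2,…,N of the second level -/
def idx2 : Finset (Fin (N + M + 1)) := univ.filter fun i => 2 ≤ (i : ℕ) ∧ (i : ℕ) ≤ N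
/-- indices N+1,…,N+M of the third level -/
def idx3 : Finset (Fin (N + M + 1)) := univ.filter fun i => N + 1 ≤ (i : ℕ)

/-- orthogonal projection onto span{e_0} -/
def P0 : AKVSpace N M →L[ℂ] AKVSpace N M := ketbra N M (ket N M 0) (ket N M 0)
/-- orthogonal projection onto span{e_1} -/
def P1 : AKVSpace N M →L[ℂ] AKVSpace N M := ketbra N M (ket N M 1) (ket N M 1)
/-- orthogonal projection onto span{e_2,…,e_N} -/
def P2 : AKVSpace N M →L[ℂ] AKVSpace N M := ∑ i ∈ idx2 N M, ketbra N M (ket N M i) (ket N M i)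
/-- orthogonal projection onto span{e_{N+1},…,e_{N+M}} -/
def P3 : AKVSpace N M →L[ℂ] AKVSpace N M := ∑ i ∈ idx3 N M, ketbra N M (ket N M i) (ket N M i)

/-- ψ = e_2 + ⋯ + e_N -/
def psi : AKVSpace N M := ∑ i ∈ idx2 N M, ket N M i
/-- ψ' = e_{N+1} + ⋯ + e_{N+M} -/
def psi' : AKVSpace N M := ∑ i ∈ idx3 N M, ket N M i

/-- |Z| = Z⋆Z -/
def absZ (Z : AKVSpace N M →L[ℂ] AKVSpace N M) : AKVSpace N M →L[ℂ] AKVSpace N M :=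
  adjoint Z * Z

/-- hypotheses on the interference operator Z of the modified AKV model -/
def IsAKVZ (hM : 1 ≤ M) (Z : AKVSpace N M →L[ℂ] AKVSpace N M) : Prop :=
  Z = P3 N M * Z * P2 N M ∧
  Z * adjoint Z = P3 N M ∧
  Z (ket N M ⟨N - 1, by omega⟩) = ((Real.sqrt ((N : ℝ) - 1))⁻¹ : ℂ) • psi' N M ∧
  adjoint Z (ket N M ⟨N + 1, by omega⟩) = ((Real.sqrt ((N : ℝ) - 1))⁻¹ : ℂ) • psi N M

/-- the five Kraus operators -/
def kraus (Γ1m Γ1p Γ2m Γ2p Γ3m : ℝ) (Z : AKVSpace N M →L[ℂ] AKVSpace N M) :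
    Fin 5 → AKVSpace N M →L[ℂ] AKVSpace N M :=
  ![((Real.sqrt (2 * Γ1m) : ℝ) : ℂ) • ketbra N M (psi N M) (ket N M 1),
    ((Real.sqrt (2 * ((N : ℝ) - 1) * Γ2m) : ℝ) : ℂ) • Z,
    ((Real.sqrt (2 * Γ3m) : ℝ) : ℂ) • ketbra N M (ket N M 0) (psi' N M),
    ((Real.sqrt (2 * Γ1p) : ℝ) : ℂ) • ketbra N M (ket N M 1) (psi N M),
    ((Real.sqrt (2 * ((N : ℝ) - 1) * Γ2p) : ℝ) : ℂ) • adjoint Z]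

/-- the effective Hamiltonian -/
def Heff (γ1m γ1p γ2m γ2p γ3m : ℝ) (Z : AKVSpace N M →L[ℂ] AKVSpace N M) :
    AKVSpace N M →L[ℂ] AKVSpace N M :=
  (γ1p : ℂ) • ketbra N M (psi N M) (psi N M)
    - (((N : ℂ) - 1) * (γ1m : ℂ)) • ketbra N M (ket N M 1) (ket N M 1)
    + (((N : ℂ) - 1) * (γ2p : ℂ)) • P3 N M
    - (((N : ℂ) - 1) * (γ2m : ℂ)) • absZ N M Z
    - (γ3m : ℂ) • ketbra N M (psi' N M) (psi' N M)

/-- the predual GKSL generator ℒ_* of the modified AKV model -/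
def Lstar (Γ1m Γ1p Γ2m Γ2p Γ3m γ1m γ1p γ2m γ2p γ3m : ℝ)
    (Z ρ : AKVSpace N M →L[ℂ] AKVSpace N M) : AKVSpace N M →L[ℂ] AKVSpace N M :=
  -Complex.I • (Heff N M γ1m γ1p γ2m γ2p γ3m Z * ρ - ρ * Heff N M γ1m γ1p γ2m γ2p γ3m Z)
    + ∑ k : Fin 5,
        (kraus N M Γ1m Γ1p Γ2m Γ2p Γ3m Z k * ρ * adjoint (kraus N M Γ1m Γ1p Γ2m Γ2p Γ3m Z k)
          - (1 / 2 : ℂ) • (adjoint (kraus N M Γ1m Γ1p Γ2m Γ2p Γ3m Z k) *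
                kraus N M Γ1m Γ1p Γ2m Γ2p Γ3m Z k * ρ
              + ρ * (adjoint (kraus N M Γ1m Γ1p Γ2m Γ2p Γ3m Z k) *
                kraus N M Γ1m Γ1p Γ2m Γ2p Γ3m Z k)))

/-- a state: positive semidefinite with trace one -/
def IsState (ρ : AKVSpace N M →L[ℂ] AKVSpace N M) : Prop :=
  ρ.IsPositive ∧ LinearMap.trace ℂ (AKVSpace N M) ↑ρ = 1

/-- the interaction-free subspace W_D -/
def WD (Z : AKVSpace N M →L[ℂ] AKVSpace N M) : Submodule ℂ (AKVSpace N M) :=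
  (Submodule.span ℂ {ket N M 1, psi N M, psi' N M})ᗮ ⊓
    LinearMap.ker (Z : AKVSpace N M →ₗ[ℂ] AKVSpace N M) ⊓ LinearMap.ker (adjoint Z : AKVSpace N M →ₗ[ℂ] AKVSpace N M)

/-- the subspace V = {e_0, e_1, ψ, ψ', Zψ, Z⋆ψ'}^⊥ -/
def Vsub (Z : AKVSpace N M →L[ℂ] AKVSpace N M) : Submodule ℂ (AKVSpace N M) :=
  (Submodule.span ℂ
    {ket N M 0, ket N M 1, psi N M, psi' N M, Z (psi N M), adjoint Z (psi' N M)})ᗮ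

/-- Im|Z| ∩ {ψ, Z⋆ψ'}^⊥ -/
def subA (Z : AKVSpace N M →L[ℂ] AKVSpace N M) : Submodule ℂ (AKVSpace N M) :=
  LinearMap.range (absZ N M Z : AKVSpace N M →ₗ[ℂ] AKVSpace N M) ⊓ (Submodule.span ℂ {psi N M, adjoint Z (psi' N M)})ᗮ

/-- ran P₃ ∩ {ψ', Zψ}^⊥ -/
def subB (Z : AKVSpace N M →L[ℂ] AKVSpace N M) : Submodule ℂ (AKVSpace N M) :=
  LinearMap.range (P3 N M : AKVSpace N M →ₗ[ℂ] AKVSpace N M) ⊓ (Submodule.span ℂ {psi' N M, Z (psi N M)})ᗮ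

/-- the orthogonal projection onto a subspace, as an operator on the whole space -/
def projOp (U : Submodule ℂ (AKVSpace N M)) : AKVSpace N M →L[ℂ] AKVSpace N M :=
  U.subtypeL ∘L U.orthogonalProjectionOnto

end AKV

/-!
Since `M < N - 1`, the map `Z` sends the `(N - 1)`-dimensional space `span{e_2, …, e_N}` into
`ran P₃`, of dimension `M`, so it kills some nonzero `u` there. Because `Z Z⋆ = P₃` and
`Z⋆ e_{N+1}` is a multiple of `ψ`, also `Z⋆ u = 0` and `u ⊥ ψ`; thus `u`, and likewise `e_0`, lie
in the interaction-free subspace `W_D`, on which every Kraus operator and the self-adjoint `H_eff`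
vanish. The pure state `ρ` onto `φ ∝ e_0 + u` is therefore stationary and annihilates the Kraus
operators. But `e_0` and `u` are eigenvectors of `P₀` (eigenvalues `1, 0`) and of
`H = ε₁P₁ + ε₂P₂ + ε₃P₃` (eigenvalues `0, ε₂`), and the projection onto a superposition of two
eigenvectors with distinct eigenvalues commutes with neither operator.
-/

open InnerProductSpace

section RankOne

variable {𝕜 E : Type*} [RCLike 𝕜] [NormedAddCommGroup E] [InnerProductSpace 𝕜 E]

lemma Submodule.mem_orthogonal_span_iff {s : Set E} {v : E} :
    v ∈ (Submodule.span 𝕜 s)ᗮ ↔ ∀ u ∈ s, ⟪u, v⟫_𝕜 = 0 := by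
  rw [← Submodule.span_singleton_le_iff_mem, ← Submodule.isOrtho_iff_le, Submodule.isOrtho_comm,
    Submodule.isOrtho_span]
  simp

lemma mul_rankOne_self_eq_zero {A : E →L[𝕜] E} {φ : E} (h : A φ = 0) :
    A * rankOne 𝕜 φ φ = 0 := by
  rw [ContinuousLinearMap.mul_def, comp_rankOne, h, map_zero, zero_apply]

lemma rankOne_self_mul_eq_zero [CompleteSpace E] {A : E →L[𝕜] E} {φ : E}
    (h : adjoint A φ = 0) : rankOne 𝕜 φ φ * A = 0 := by
  rw [ContinuousLinearMap.mul_def, rankOne_comp, h, map_zero]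

lemma trace_rankOne_self_mul [CompleteSpace E] [FiniteDimensional 𝕜 E] (φ : E) (A : E →L[𝕜] E) :
    LinearMap.trace 𝕜 E ↑(rankOne 𝕜 φ φ * A) = ⟪φ, A φ⟫_𝕜 := by
  rw [ContinuousLinearMap.mul_def, rankOne_comp, trace_rankOne, adjoint_inner_left]

lemma commutator_rankOne_self_eq_zero [CompleteSpace E] {H : E →L[𝕜] E} (hH : IsSelfAdjoint H)
    {φ : E} (h : H φ = 0) : H * rankOne 𝕜 φ φ - rankOne 𝕜 φ φ * H = 0 := by
  rw [mul_rankOne_self_eq_zero h, rankOne_self_mul_eq_zero (by rwa [hH.adjoint_eq]), sub_zero]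

lemma dissipator_rankOne_self_eq_zero [CompleteSpace E] {L : E →L[𝕜] E} {φ : E} (h : L φ = 0) :
    L * rankOne 𝕜 φ φ * adjoint L
      - (1 / 2 : 𝕜) • (adjoint L * L * rankOne 𝕜 φ φ + rankOne 𝕜 φ φ * (adjoint L * L)) = 0 := by
  have hLL : (adjoint L * L) φ = 0 := by rw [mul_apply_eq_comp, h, map_zero]
  have hLL' : adjoint (adjoint L * L) φ = 0 := by
    rwa [ContinuousLinearMap.mul_def, adjoint_comp, adjoint_adjoint, ← ContinuousLinearMap.mul_def]
  rw [mul_rankOne_self_eq_zero h, mul_rankOne_self_eq_zero hLL, rankOne_self_mul_eq_zero hLL',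
    zero_mul, add_zero, smul_zero, sub_zero]

lemma apply_eq_inner_smul_of_commute_rankOne_self {A : E →L[𝕜] E} {φ : E} (hφ : ‖φ‖ = 1)
    (h : rankOne 𝕜 φ φ * A = A * rankOne 𝕜 φ φ) : A φ = ⟪φ, A φ⟫_𝕜 • φ := by
  have := congr($h φ)
  rw [mul_apply_eq_comp, mul_apply_eq_comp, rankOne_apply, rankOne_apply, map_smul,
    inner_self_eq_norm_sq_to_K, hφ] at this
  simpa using this.symm

lemma rankOne_self_mul_ne_mul_rankOne_self {A : E →L[𝕜] E} {e u φ : E} {c a b : 𝕜}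
    (he : e ≠ 0) (hu : u ≠ 0) (heu : ⟪e, u⟫_𝕜 = 0) (hφ : ‖φ‖ = 1) (hφeu : φ = c • (e + u))
    (hAe : A e = a • e) (hAu : A u = b • u) (hab : a ≠ b) :
    rankOne 𝕜 φ φ * A ≠ A * rankOne 𝕜 φ φ := by
  intro h
  have hc : c ≠ 0 := by rintro rfl; simp [hφeu] at hφ
  have hAφ := apply_eq_inner_smul_of_commute_rankOne_self hφ h
  rw [hφeu, map_smul, map_add, hAe, hAu] at hAφ
  simp only [smul_add, smul_smul] at hAφ
  have hli : LinearIndependent 𝕜 ![e, u] := by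
    rw [LinearIndependent.pair_iff' he]
    rintro a rfl
    simp_all [inner_smul_right]
  obtain ⟨hca, hcb⟩ := LinearIndependent.pair_iffₛ.mp hli _ _ _ _ hAφ
  exact hab (mul_left_cancel₀ hc (hca.trans hcb.symm))

end RankOne

namespace AKV

variable {N M : ℕ}

lemma ketbra_eq_rankOne (u v : AKVSpace N M) : ketbra N M u v = rankOne ℂ u v := rfl

lemma inner_ket_self (i : Fin (N + M + 1)) : ⟪ket N M i, ket N M i⟫_ℂ = 1 := by
  simp [ket]

lemma inner_ket_ket_of_ne {i j : Fin (N + M + 1)} (h : i ≠ j) :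
    ⟪ket N M i, ket N M j⟫_ℂ = 0 := by
  simp [ket, EuclideanSpace.inner_single_left, Ne.symm h]

lemma inner_ket_one_ket_zero (hN : 1 ≤ N) : ⟪ket N M 1, ket N M 0⟫_ℂ = 0 :=
  inner_ket_ket_of_ne (Fin.ne_of_val_ne (by rw [Fin.val_one', Nat.mod_eq_of_lt (by omega)]; simp))

lemma notMem_idx2_of_val_lt {i : Fin (N + M + 1)} (hi : (i : ℕ) < 2) : i ∉ idx2 N M := by
  simp only [idx2, mem_filter, mem_univ, true_and]
  omega

lemma notMem_idx2_of_mem_idx3 {i : Fin (N + M + 1)} (hi : i ∈ idx3 N M) : i ∉ idx2 N M := by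
  simp only [idx2, idx3, mem_filter, mem_univ, true_and] at hi ⊢
  omega

lemma zero_notMem_idx2 : (0 : Fin (N + M + 1)) ∉ idx2 N M :=
  notMem_idx2_of_val_lt (by simp)

lemma one_notMem_idx2 : (1 : Fin (N + M + 1)) ∉ idx2 N M :=
  notMem_idx2_of_val_lt ((Fin.val_one' _).trans_le (Nat.mod_le _ _) |>.trans_lt one_lt_two)

lemma zero_notMem_idx3 : (0 : Fin (N + M + 1)) ∉ idx3 N M := by
  simp [idx3]

lemma card_idx2 : #(idx2 N M) = N - 1 := by
  have : (idx2 N M).map Fin.valEmbedding = Icc 2 N := by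
    ext k
    simp only [idx2, mem_map, mem_filter, mem_univ, true_and, Fin.valEmbedding_apply, mem_Icc]
    exact ⟨by rintro ⟨i, hi, rfl⟩; exact hi, fun hk => ⟨⟨k, by omega⟩, hk, rfl⟩⟩
  rw [← card_map, this, Nat.card_Icc]
  omega

lemma card_idx3 : #(idx3 N M) = M := by
  have : (idx3 N M).map Fin.valEmbedding = Icc (N + 1) (N + M) := by
    ext k
    simp only [idx3, mem_map, mem_filter, mem_univ, true_and, Fin.valEmbedding_apply, mem_Icc]
    exact ⟨by rintro ⟨i, hi, rfl⟩; exact ⟨hi, by omega⟩, fun hk => ⟨⟨k, by omega⟩, hk.1, rfl⟩⟩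
  rw [← card_map, this, Nat.card_Icc]
  omega

lemma P2_apply (x : AKVSpace N M) :
    P2 N M x = ∑ i ∈ idx2 N M, ⟪ket N M i, x⟫_ℂ • ket N M i := by
  simp [P2, ketbra_eq_rankOne]

lemma P3_apply (x : AKVSpace N M) :
    P3 N M x = ∑ i ∈ idx3 N M, ⟪ket N M i, x⟫_ℂ • ket N M i := by
  simp [P3, ketbra_eq_rankOne]

lemma P2_apply_eq_zero {x : AKVSpace N M} (h : ∀ i ∈ idx2 N M, ⟪ket N M i, x⟫_ℂ = 0) :
    P2 N M x = 0 := by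
  rw [P2_apply]
  exact sum_eq_zero fun i hi => by rw [h i hi, zero_smul]

lemma P3_apply_eq_zero {x : AKVSpace N M} (h : ∀ i ∈ idx3 N M, ⟪ket N M i, x⟫_ℂ = 0) :
    P3 N M x = 0 := by
  rw [P3_apply]
  exact sum_eq_zero fun i hi => by rw [h i hi, zero_smul]

lemma inner_psi'_eq_zero {x : AKVSpace N M} (h : ∀ i ∈ idx3 N M, ⟪ket N M i, x⟫_ℂ = 0) :
    ⟪psi' N M, x⟫_ℂ = 0 := by
  rw [psi', sum_inner]
  exact sum_eq_zero h

lemma P2_ket_zero : P2 N M (ket N M 0) = 0 :=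
  P2_apply_eq_zero fun _ hi => inner_ket_ket_of_ne (ne_of_mem_of_not_mem hi zero_notMem_idx2)

lemma inner_ket_ket_zero_of_mem_idx3 {i : Fin (N + M + 1)} (hi : i ∈ idx3 N M) :
    ⟪ket N M i, ket N M 0⟫_ℂ = 0 :=
  inner_ket_ket_of_ne (ne_of_mem_of_not_mem hi zero_notMem_idx3)

lemma isSelfAdjoint_P3 : IsSelfAdjoint (P3 N M) := by
  rw [P3]
  exact isSelfAdjoint_sum _ fun i _ => (isPositive_rankOne_self (ket N M i)).isSelfAdjoint

def levelTwo (N M : ℕ) : Submodule ℂ (AKVSpace N M) :=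
  Submodule.span ℂ (Set.range fun i : idx2 N M => ket N M i)

lemma finrank_levelTwo : Module.finrank ℂ (levelTwo N M) = N - 1 := by
  have hli : LinearIndependent ℂ fun i : idx2 N M => ket N M i :=
    (EuclideanSpace.orthonormal_single.comp _ Subtype.val_injective).linearIndependent
  rw [levelTwo, finrank_span_eq_card hli, Fintype.card_coe, card_idx2]

lemma finrank_range_P3_le : Module.finrank ℂ (LinearMap.range (P3 N M).toLinearMap) ≤ M := by
  let levelThree := Submodule.span ℂ (Set.range fun i : idx3 N M => ket N M i)
  have hle : LinearMap.range (P3 N M).toLinearMap ≤ levelThree := by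
    rintro _ ⟨x, rfl⟩
    rw [ContinuousLinearMap.coe_coe, P3_apply, ← sum_attach]
    exact Submodule.sum_mem _ fun i _ => Submodule.smul_mem _ _ (Submodule.subset_span ⟨i, rfl⟩)
  calc Module.finrank ℂ (LinearMap.range (P3 N M).toLinearMap)
      ≤ Module.finrank ℂ levelThree := Submodule.finrank_mono hle
    _ ≤ Fintype.card (idx3 N M) := finrank_range_le_card _
    _ = M := by rw [Fintype.card_coe, card_idx3]

lemma inner_ket_eq_zero_of_mem_levelTwo {u : AKVSpace N M} (hu : u ∈ levelTwo N M)
    {i : Fin (N + M + 1)} (hi : i ∉ idx2 N M) : ⟪ket N M i, u⟫_ℂ = 0 := by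
  refine Submodule.inner_left_of_mem_orthogonal hu (Submodule.mem_orthogonal_span_iff.mpr ?_)
  rintro _ ⟨j, rfl⟩
  exact inner_ket_ket_of_ne fun h => hi (h ▸ j.2)

lemma P2_apply_of_mem_levelTwo {u : AKVSpace N M} (hu : u ∈ levelTwo N M) : P2 N M u = u := by
  refine LinearMap.eqOn_span' (f := (P2 N M).toLinearMap) (g := LinearMap.id) ?_ hu
  rintro _ ⟨j, rfl⟩
  rw [ContinuousLinearMap.coe_coe, P2_apply, sum_eq_single_of_mem _ j.2, inner_ket_self, one_smul]
  · rfl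
  · intro i _ hij
    rw [inner_ket_ket_of_ne hij, zero_smul]

lemma exists_mem_levelTwo_ne_zero_Z_eq_zero (hM : M < N - 1)
    {Z : AKVSpace N M →L[ℂ] AKVSpace N M} (hZ : Z = P3 N M * Z * P2 N M) :
    ∃ u ∈ levelTwo N M, u ≠ 0 ∧ Z u = 0 := by
  let f := (Z.toLinearMap ∘ₗ (levelTwo N M).subtype).codRestrict
    (LinearMap.range (P3 N M).toLinearMap) fun x => ⟨Z (P2 N M x), by
      conv_rhs => rw [hZ]
      rfl⟩
  have hker : LinearMap.ker f ≠ ⊥ :=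
    LinearMap.ker_ne_bot_of_finrank_lt (finrank_range_P3_le.trans_lt (finrank_levelTwo ▸ hM))
  obtain ⟨w, hw, hw0⟩ := (Submodule.ne_bot_iff _).mp hker
  exact ⟨w, w.2, by simpa using hw0, congrArg Subtype.val (LinearMap.mem_ker.mp hw)⟩

section Interference

variable {Z : AKVSpace N M →L[ℂ] AKVSpace N M}

lemma mem_WD_iff {x : AKVSpace N M} : x ∈ WD N M Z ↔
    (⟪ket N M 1, x⟫_ℂ = 0 ∧ ⟪psi N M, x⟫_ℂ = 0 ∧ ⟪psi' N M, x⟫_ℂ = 0) ∧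
      Z x = 0 ∧ adjoint Z x = 0 := by
  simp [WD, Submodule.mem_orthogonal_span_iff, and_assoc]

lemma adjoint_apply_eq_zero_of_P3_apply_eq_zero (hZZ : Z * adjoint Z = P3 N M)
    {x : AKVSpace N M} (hx : P3 N M x = 0) : adjoint Z x = 0 := by
  rw [← inner_self_eq_zero (𝕜 := ℂ), adjoint_inner_left, ← mul_apply_eq_comp, hZZ, hx,
    inner_zero_right]

lemma inner_psi_eq_zero_of_apply_eq_zero {hM : 1 ≤ M} (hZ : IsAKVZ N M hM Z) (hN : 2 ≤ N)
    {x : AKVSpace N M} (hx : Z x = 0) : ⟪psi N M, x⟫_ℂ = 0 := by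
  have hN' : (0 : ℝ) < N - 1 := by
    have : (2 : ℝ) ≤ N := by exact_mod_cast hN
    linarith
  have hc : ((Real.sqrt ((N : ℝ) - 1))⁻¹ : ℂ) ≠ 0 := by
    simpa using (Real.sqrt_pos.mpr hN').ne'
  have h := adjoint_inner_left Z x (ket N M ⟨N + 1, by omega⟩)
  rw [hZ.2.2.2, hx, inner_zero_right, inner_smul_left] at h
  exact (mul_eq_zero.mp h).resolve_left (by simpa using hc)

lemma mem_WD_of_inner_ket_eq_zero {hM : 1 ≤ M} (hZ : IsAKVZ N M hM Z) (hN : 2 ≤ N)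
    {x : AKVSpace N M} (h1 : ⟪ket N M 1, x⟫_ℂ = 0)
    (h3 : ∀ i ∈ idx3 N M, ⟪ket N M i, x⟫_ℂ = 0) (hZx : Z x = 0) : x ∈ WD N M Z :=
  mem_WD_iff.mpr ⟨⟨h1, inner_psi_eq_zero_of_apply_eq_zero hZ hN hZx, inner_psi'_eq_zero h3⟩, hZx,
    adjoint_apply_eq_zero_of_P3_apply_eq_zero hZ.2.1 (P3_apply_eq_zero h3)⟩

lemma ket_zero_mem_WD {hM : 1 ≤ M} (hZ : IsAKVZ N M hM Z) (hN : 2 ≤ N) :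
    ket N M 0 ∈ WD N M Z := by
  refine mem_WD_of_inner_ket_eq_zero hZ hN (inner_ket_one_ket_zero (by omega))
    (fun _ => inner_ket_ket_zero_of_mem_idx3) ?_
  rw [hZ.1, mul_apply_eq_comp, mul_apply_eq_comp, P2_ket_zero, map_zero, map_zero]

lemma mem_WD_of_mem_levelTwo {hM : 1 ≤ M} (hZ : IsAKVZ N M hM Z) (hN : 2 ≤ N)
    {u : AKVSpace N M} (hu : u ∈ levelTwo N M) (hZu : Z u = 0) : u ∈ WD N M Z :=
  mem_WD_of_inner_ket_eq_zero hZ hN (inner_ket_eq_zero_of_mem_levelTwo hu one_notMem_idx2)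
    (fun _ hi => inner_ket_eq_zero_of_mem_levelTwo hu (notMem_idx2_of_mem_idx3 hi)) hZu

lemma isSelfAdjoint_Heff (γ1m γ1p γ2m γ2p γ3m : ℝ) :
    IsSelfAdjoint (Heff N M γ1m γ1p γ2m γ2p γ3m Z) := by
  rw [ContinuousLinearMap.isSelfAdjoint_iff']
  simp only [Heff, absZ, ketbra_eq_rankOne, map_sub, map_add, map_smulₛₗ, map_mul, map_natCast,
    map_one, Complex.conj_ofReal, adjoint_rankOne, ContinuousLinearMap.mul_def, adjoint_comp,
    adjoint_adjoint, isSelfAdjoint_P3.adjoint_eq]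

lemma Heff_apply_eq_zero_of_mem_WD (γ1m γ1p γ2m γ2p γ3m : ℝ) (hZZ : Z * adjoint Z = P3 N M)
    {x : AKVSpace N M} (hx : x ∈ WD N M Z) : Heff N M γ1m γ1p γ2m γ2p γ3m Z x = 0 := by
  obtain ⟨⟨h1, hψ, hψ'⟩, hZx, hZx'⟩ := mem_WD_iff.mp hx
  simp [Heff, absZ, ketbra_eq_rankOne, ← hZZ, h1, hψ, hψ', hZx, hZx']

lemma kraus_apply_eq_zero_of_mem_WD (Γ1m Γ1p Γ2m Γ2p Γ3m : ℝ) {x : AKVSpace N M}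
    (hx : x ∈ WD N M Z) (k : Fin 5) : kraus N M Γ1m Γ1p Γ2m Γ2p Γ3m Z k x = 0 := by
  obtain ⟨⟨h1, hψ, hψ'⟩, hZx, hZx'⟩ := mem_WD_iff.mp hx
  fin_cases k <;> simp [kraus, ketbra_eq_rankOne, h1, hψ, hψ', hZx, hZx']

lemma Lstar_ketbra_self_eq_zero_of_mem_WD (Γ1m Γ1p Γ2m Γ2p Γ3m γ1m γ1p γ2m γ2p γ3m : ℝ)
    (hZZ : Z * adjoint Z = P3 N M) {φ : AKVSpace N M} (hφ : φ ∈ WD N M Z) :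
    Lstar N M Γ1m Γ1p Γ2m Γ2p Γ3m γ1m γ1p γ2m γ2p γ3m Z (ketbra N M φ φ) = 0 := by
  have hcomm := commutator_rankOne_self_eq_zero (isSelfAdjoint_Heff γ1m γ1p γ2m γ2p γ3m)
    (Heff_apply_eq_zero_of_mem_WD _ _ _ _ _ hZZ hφ)
  have hdiss := fun k =>
    dissipator_rankOne_self_eq_zero (kraus_apply_eq_zero_of_mem_WD Γ1m Γ1p Γ2m Γ2p Γ3m hφ k)
  simp only [Lstar, ketbra_eq_rankOne, hcomm, hdiss, sum_const_zero, add_zero]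
  -- the `0` coming from `hcomm` carries the instances of the general lemma, hence the explicit type
  exact smul_zero (A := AKVSpace N M →L[ℂ] AKVSpace N M) (-Complex.I)

end Interference

def refHam (ε1 ε2 ε3 : ℝ) : AKVSpace N M →L[ℂ] AKVSpace N M :=
  (ε1 : ℂ) • P1 N M + (ε2 : ℂ) • P2 N M + (ε3 : ℂ) • P3 N M

lemma P0_ket_zero : P0 N M (ket N M 0) = (1 : ℂ) • ket N M 0 := by
  rw [P0, ketbra_eq_rankOne, rankOne_apply, inner_ket_self]

lemma P0_apply_of_mem_levelTwo {u : AKVSpace N M} (hu : u ∈ levelTwo N M) :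
    P0 N M u = (0 : ℂ) • u := by
  rw [P0, ketbra_eq_rankOne, rankOne_apply, inner_ket_eq_zero_of_mem_levelTwo hu zero_notMem_idx2,
    zero_smul, zero_smul]

lemma refHam_ket_zero (hN : 1 ≤ N) (ε1 ε2 ε3 : ℝ) :
    refHam ε1 ε2 ε3 (ket N M 0) = (0 : ℂ) • ket N M 0 := by
  have hP1 : P1 N M (ket N M 0) = 0 := by
    rw [P1, ketbra_eq_rankOne, rankOne_apply, inner_ket_one_ket_zero hN, zero_smul]
  simp [refHam, hP1, P2_ket_zero, P3_apply_eq_zero fun _ => inner_ket_ket_zero_of_mem_idx3]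

lemma refHam_apply_of_mem_levelTwo (ε1 ε2 ε3 : ℝ) {u : AKVSpace N M} (hu : u ∈ levelTwo N M) :
    refHam ε1 ε2 ε3 u = (ε2 : ℂ) • u := by
  have hP1 : P1 N M u = 0 := by
    rw [P1, ketbra_eq_rankOne, rankOne_apply,
      inner_ket_eq_zero_of_mem_levelTwo hu one_notMem_idx2, zero_smul]
  have hP3 : P3 N M u = 0 :=
    P3_apply_eq_zero fun _ hi => inner_ket_eq_zero_of_mem_levelTwo hu (notMem_idx2_of_mem_idx3 hi)
  simp [refHam, hP1, P2_apply_of_mem_levelTwo hu, hP3]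

theorem exists_invariant_in_annihilator_not_in_commutant_general
    (N M : ℕ) (hM1 : 1 ≤ M) (hM2 : M < N - 1)
    (Γ1m Γ1p Γ2m Γ2p Γ3m γ1m γ1p γ2m γ2p γ3m : ℝ)
    (Z : AKVSpace N M →L[ℂ] AKVSpace N M) (hZ : IsAKVZ N M hM1 Z) :
    ∃ ρ : AKVSpace N M →L[ℂ] AKVSpace N M, IsState N M ρ ∧
      Lstar N M Γ1m Γ1p Γ2m Γ2p Γ3m γ1m γ1p γ2m γ2p γ3m Z ρ = 0 ∧
      LinearMap.trace ℂ (AKVSpace N M) ↑(ρ * ketbra N M (psi N M) (ket N M 1)) = 0 ∧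
      LinearMap.trace ℂ (AKVSpace N M) ↑(ρ * Z) = 0 ∧
      LinearMap.trace ℂ (AKVSpace N M) ↑(ρ * ketbra N M (ket N M 0) (psi' N M)) = 0 ∧
      ρ * P0 N M ≠ P0 N M * ρ ∧
      ∀ ε1 ε2 ε3 : ℝ, 0 < ε1 → 0 < ε2 → 0 < ε3 → ε1 ≠ ε2 → ε1 ≠ ε3 → ε2 ≠ ε3 →
        ρ * ((ε1 : ℂ) • P1 N M + (ε2 : ℂ) • P2 N M + (ε3 : ℂ) • P3 N M)
          ≠ ((ε1 : ℂ) • P1 N M + (ε2 : ℂ) • P2 N M + (ε3 : ℂ) • P3 N M) * ρ := by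
  have hN : 2 ≤ N := by omega
  obtain ⟨u, hu, hu0, hZu⟩ := exists_mem_levelTwo_ne_zero_Z_eq_zero hM2 hZ.1
  have he0 : ket N M 0 ≠ 0 := by simp [ket]
  have he0u : ⟪ket N M 0, u⟫_ℂ = 0 := inner_ket_eq_zero_of_mem_levelTwo hu zero_notMem_idx2
  have hne : ket N M 0 + u ≠ 0 := fun h => he0 (by
    simpa [inner_add_right, inner_ket_self, he0u] using congr(⟪ket N M 0, $h⟫_ℂ))
  set φ := (‖ket N M 0 + u‖⁻¹ : ℂ) • (ket N M 0 + u) with hφ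
  have hφ1 : ‖φ‖ = 1 := norm_smul_inv_norm hne
  have hφWD : φ ∈ WD N M Z := Submodule.smul_mem _ _
    (add_mem (ket_zero_mem_WD hZ hN) (mem_WD_of_mem_levelTwo hZ hN hu hZu))
  obtain ⟨⟨h1φ, -, hψ'φ⟩, hZφ, -⟩ := mem_WD_iff.mp hφWD
  refine ⟨ketbra N M φ φ, ⟨isPositive_rankOne_self φ, ?_⟩,
    Lstar_ketbra_self_eq_zero_of_mem_WD _ _ _ _ _ _ _ _ _ _ hZ.2.1 hφWD, ?_, ?_, ?_,
    rankOne_self_mul_ne_mul_rankOne_self he0 hu0 he0u hφ1 hφ P0_ket_zero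
      (P0_apply_of_mem_levelTwo hu) one_ne_zero, ?_⟩
  · rw [ketbra_eq_rankOne, trace_rankOne, inner_self_eq_norm_sq_to_K, hφ1]
    simp
  · rw [ketbra_eq_rankOne, trace_rankOne_self_mul, ketbra_eq_rankOne, rankOne_apply, h1φ,
      zero_smul, inner_zero_right]
  · rw [ketbra_eq_rankOne, trace_rankOne_self_mul, hZφ, inner_zero_right]
  · rw [ketbra_eq_rankOne, trace_rankOne_self_mul, ketbra_eq_rankOne, rankOne_apply, hψ'φ,
      zero_smul, inner_zero_right]
  · intro ε1 ε2 ε3 _ hε2 _ _ _ _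
    exact rankOne_self_mul_ne_mul_rankOne_self he0 hu0 he0u hφ1 hφ (refHam_ket_zero (by omega) ..)
      (refHam_apply_of_mem_levelTwo ε1 ε2 ε3 hu) (by exact_mod_cast hε2.ne)

/-- In the modified AKV model, if `M < N − 1` then there is an invariant state lying in the
annihilator of all Kraus operators which does not commute with `P₀`, hence does not commute
with the reference Hamiltonian `H = ε₁P₁ + ε₂P₂ + ε₃P₃` for any distinct positive
`ε₁, ε₂, ε₃`. -/
theorem exists_invariant_in_annihilator_not_in_commutant
    (N M : ℕ) (hN : 3 ≤ N) (hM1 : 1 ≤ M) (hM2 : M < N - 1)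
    (Γ1m Γ1p Γ2m Γ2p Γ3m γ1m γ1p γ2m γ2p γ3m : ℝ)
    (hΓ : 0 < Γ1m ∧ 0 < Γ1p ∧ 0 < Γ2m ∧ 0 < Γ2p ∧ 0 < Γ3m)
    (hγ : 0 < γ1m ∧ 0 < γ1p ∧ 0 < γ2m ∧ 0 < γ2p ∧ 0 < γ3m)
    (Z : AKVSpace N M →L[ℂ] AKVSpace N M) (hZ : IsAKVZ N M hM1 Z) :
    ∃ ρ : AKVSpace N M →L[ℂ] AKVSpace N M, IsState N M ρ ∧
      Lstar N M Γ1m Γ1p Γ2m Γ2p Γ3m γ1m γ1p γ2m γ2p γ3m Z ρ = 0 ∧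
      LinearMap.trace ℂ (AKVSpace N M) ↑(ρ * ketbra N M (psi N M) (ket N M 1)) = 0 ∧
      LinearMap.trace ℂ (AKVSpace N M) ↑(ρ * Z) = 0 ∧
      LinearMap.trace ℂ (AKVSpace N M) ↑(ρ * ketbra N M (ket N M 0) (psi' N M)) = 0 ∧
      ρ * P0 N M ≠ P0 N M * ρ ∧
      ∀ ε1 ε2 ε3 : ℝ, 0 < ε1 → 0 < ε2 → 0 < ε3 → ε1 ≠ ε2 → ε1 ≠ ε3 → ε2 ≠ ε3 →
        ρ * ((ε1 : ℂ) • P1 N M + (ε2 : ℂ) • P2 N M + (ε3 : ℂ) • P3 N M)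
          ≠ ((ε1 : ℂ) • P1 N M + (ε2 : ℂ) • P2 N M + (ε3 : ℂ) • P3 N M) * ρ :=
  exists_invariant_in_annihilator_not_in_commutant_general N M hM1 hM2 Γ1m Γ1p Γ2m Γ2p Γ3m γ1m γ1p
    γ2m γ2p γ3m Z hZ

end AKV
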